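/- arXiv:2601.01917 — 3 statements merged into one kernel-verified Lean document; each statement's English description precedes it below -/
import Mathlib

section
/- For a real-valued random variable X supported in the interval [m, M] with mean μ, the variance of X is at most (M − μ)(μ − m). -/
open MeasureTheory ProbabilityTheory

/-- Bhatia–Davis inequality: for a real random variable supported in `[m, M]`
with mean `μ`, the variance is at most `(M - μ) * (μ - m)`. -/
theorem bhatia_davis
    {Ω : Type*} [MeasurableSpace Ω] (P : Measure Ω) [IsProbabilityMeasure P]
    (X : Ω → ℝ) (hX : MemLp X 2 P)
    (m M μ : ℝ)
    (hm : ∀ᵐ ω ∂P, m ≤ X ω) (hM : ∀ᵐ ω ∂P, X ω ≤ M)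
    (hmean : ∫ ω, X ω ∂P = μ) :
    variance X P ≤ (M - μ) * (μ - m) := by
  have hint : Integrable X P := hX.integrable one_le_two
  have hsq : Integrable (fun ω => X ω ^ 2) P := hX.integrable_sq
  have h0 : 0 ≤ ∫ ω, (M - X ω) * (X ω - m) ∂P := by
    apply integral_nonneg_of_ae
    filter_upwards [hm, hM] with ω h1 h2
    exact mul_nonneg (by linarith) (by linarith)
  have heq : ∫ ω, (M - X ω) * (X ω - m) ∂P
      = (M + m) * μ - M * m - ∫ ω, X ω ^ 2 ∂P := by
    have : ∀ ω, (M - X ω) * (X ω - m)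
        = (M + m) * X ω - M * m - X ω ^ 2 := by intro ω; ring
    simp_rw [this]
    rw [integral_sub (by exact (hint.const_mul _).sub (integrable_const _)) hsq,
      integral_sub (hint.const_mul _) (integrable_const _),
      integral_const_mul, hmean]
    simp
  have hvar : variance X P = (∫ ω, X ω ^ 2 ∂P) - μ ^ 2 := by
    rw [variance_eq_sub hX, hmean]; rfl
  nlinarith [h0, heq, hvar]
end

section
/- Under iteration of the distorted operator, the deviation from the undistorted iterates is controlled by geometric sums: if F₀⁻¹ = F̲₀⁻¹, F_{t+1}⁻¹ = B F_t⁻¹, and F̲_{t+1}⁻¹ = Q_φ B F̲_t⁻¹, where B is order-preserving and satisfies B(F⁻¹ − c) = B F⁻¹ − γc for constants c, then for all t ≥ 0: F_t⁻¹(τ;s,a) − ∑_{k=1}^{t} γ^{k−1} φ̄ ≤ F̲_t⁻¹(τ;s,a) ≤ F_t⁻¹(τ;s,a) − ∑_{k=1}^{t} γ^{k−1} φ̲. -/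
/-- Iterates of the distorted operator deviate from the undistorted iterates
by at most geometric sums: if `F₀ = F̲₀`, `F_{t+1} = B F_t`, and
`F̲_{t+1} = Q_φ B F̲_t`, with `B` order-preserving and commuting with constant
shifts up to factor `γ`, then for all `t`,
`F_t i − (∑_{k<t} γ^k) φ̄ ≤ F̲_t i ≤ F_t i − (∑_{k<t} γ^k) φ̲`. -/
theorem distorted_iterates_bounds
    {ι : Type*} (γ : ℝ) (hγ : γ ∈ Set.Ioo (0 : ℝ) 1)
    (B : (ι → ℝ) → (ι → ℝ))
    (hB_mono : ∀ F G : ι → ℝ, (∀ i, F i ≤ G i) → ∀ i, B F i ≤ B G i)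
    (hB_shift : ∀ (F : ι → ℝ) (c : ℝ), B (fun i => F i - c) = fun i => B F i - γ * c)
    (φ : ι → ℝ) (φlo φhi : ℝ)
    (hφlo : ∀ i, φlo ≤ φ i) (hφhi : ∀ i, φ i ≤ φhi)
    (F Fl : ℕ → ι → ℝ)
    (h0 : F 0 = Fl 0)
    (hF : ∀ t, F (t + 1) = B (F t))
    (hFl : ∀ t, Fl (t + 1) = fun i => B (Fl t) i - φ i) :
    ∀ t i, F t i - (∑ k ∈ Finset.range t, γ ^ k) * φhi ≤ Fl t i ∧
      Fl t i ≤ F t i - (∑ k ∈ Finset.range t, γ ^ k) * φlo := by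

  intro t
  induction t with
  | zero => intro i; simp [h0]
  | succ t ih =>
    intro i
    have hS : (∑ k ∈ Finset.range (t+1), γ ^ k) = γ * (∑ k ∈ Finset.range t, γ ^ k) + 1 := by
      simpa using geom_sum_succ (x := γ) (n := t)
    constructor
    · have h1 : ∀ j, F t j - (∑ k ∈ Finset.range t, γ ^ k) * φhi ≤ Fl t j := fun j => (ih j).1
      have h2 := hB_mono _ _ h1 i
      rw [hB_shift] at h2
      have h3 : Fl (t+1) i = B (Fl t) i - φ i := by rw [hFl]
      have h4 : F (t+1) i = B (F t) i := by rw [hF]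
      have := hφhi i
      rw [h3, h4, hS]
      simp only at h2
      nlinarith
    · have h1 : ∀ j, Fl t j ≤ F t j - (∑ k ∈ Finset.range t, γ ^ k) * φlo := fun j => (ih j).2
      have h2 := hB_mono _ _ h1 i
      rw [hB_shift] at h2
      have h3 : Fl (t+1) i = B (Fl t) i - φ i := by rw [hFl]
      have h4 : F (t+1) i = B (F t) i := by rw [hF]
      have := hφlo i
      rw [h3, h4, hS]
      simp only at h2
      nlinarith
end

section
/- Consider the bound Δ(z) = (1/f(z))·√((1/(2N)) log(2K/δ)) for constants K ≥ 1, δ ∈ (0,1), N ∈ ℕ, and an α-Lipschitz density f with f(z_τ) > 0. If N ≥ (2α²/f(z_τ)⁴)·log(2K/δ), then for every z̄ with |z̄ − z_τ| ≤ Δ(z_τ), we have Δ(z̄) ≤ 2Δ(z_τ). -/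
/-- For `Δ(z) = (1/f z)·√(log(2K/δ)/(2N))` with `f` an `α`-Lipschitz
nonnegative density, `f zτ > 0`, and
`N ≥ (2α²/f(zτ)⁴)·log(2K/δ)`, every `zbar` in the `Δ(zτ)`-neighborhood of `zτ`
satisfies `Δ(zbar) ≤ 2 Δ(zτ)`. -/
theorem explicit_concentration_radius
    (f : ℝ → ℝ) (α : ℝ) (hα : 0 < α)
    (hlip : ∀ x y, |f x - f y| ≤ α * |x - y|)
    (hf_nonneg : ∀ x, 0 ≤ f x)
    (K : ℝ) (hK : 1 ≤ K) (δ : ℝ) (hδ : δ ∈ Set.Ioo (0 : ℝ) 1)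
    (N : ℕ) (hN : 0 < N)
    (zτ : ℝ) (hfz : 0 < f zτ)
    (hNlarge : (2 * α ^ 2 / f zτ ^ 4) * Real.log (2 * K / δ) ≤ N)
    (Δ : ℝ → ℝ)
    (hΔ : ∀ z, Δ z = (1 / f z) * Real.sqrt (Real.log (2 * K / δ) / (2 * N)))
    (zbar : ℝ) (hzbar : |zbar - zτ| ≤ Δ zτ) :
    Δ zbar ≤ 2 * Δ zτ := by
  obtain ⟨hδ0, hδ1⟩ := hδ
  set L := Real.log (2 * K / δ) with hLdef
  have hL : 0 < L := Real.log_pos (by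
    rw [one_lt_div hδ0]; linarith)
  set S := Real.sqrt (L / (2 * N)) with hSdef
  have hS0 : 0 ≤ S := Real.sqrt_nonneg _
  have hNpos : (0 : ℝ) < N := by exact_mod_cast hN
  -- from hNlarge: L/(2N) ≤ (f zτ^2/(2α))^2
  have h1 : 2 * α ^ 2 * L ≤ (N : ℝ) * f zτ ^ 4 := by
    rw [div_mul_eq_mul_div, div_le_iff₀ (by positivity : (0:ℝ) < f zτ ^ 4)] at hNlarge
    nlinarith
  have hkey : L / (2 * N) ≤ (f zτ ^ 2 / (2 * α)) ^ 2 := by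
    rw [div_pow, div_le_div_iff₀ (by positivity) (by positivity : (0:ℝ) < (2*α)^2)]
    nlinarith
  have hSle : S ≤ f zτ ^ 2 / (2 * α) := by
    have := Real.sqrt_le_sqrt hkey
    rwa [Real.sqrt_sq (by positivity)] at this
  have hΔτ : Δ zτ = S / f zτ := by rw [hΔ]; ring
  have hdist : α * |zbar - zτ| ≤ f zτ / 2 := by
    have : α * Δ zτ ≤ f zτ / 2 := by
      rw [hΔτ, mul_div_assoc', div_le_div_iff₀ hfz (by norm_num : (0:ℝ) < 2)]
      rw [le_div_iff₀ (by positivity : (0:ℝ) < 2 * α)] at hSle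
      nlinarith
    nlinarith [mul_le_mul_of_nonneg_left hzbar hα.le]
  have hfb : f zτ / 2 ≤ f zbar := by
    have := abs_le.mp (hlip zτ zbar)
    have h2 : |zτ - zbar| = |zbar - zτ| := abs_sub_comm _ _
    nlinarith [this.2]
  have hfbpos : 0 < f zbar := by linarith
  rw [hΔ zbar, hΔτ]
  rw [one_div_mul_eq_div]
  calc S / f zbar ≤ S / (f zτ / 2) :=
        div_le_div_of_nonneg_left hS0 (by linarith) hfb
    _ = 2 * (S / f zτ) := by field_simp
end
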